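/- arXiv:1509.03380 — 4 statements merged into one kernel-verified Lean document; each statement's English description precedes it below -/
import Mathlib

section
/- Let G and H be finite connected simple graphs. The ℚ-vector space of functions φ: V(G)×V(H)→ℚ satisfying φ(a,b) + φ(a',b') = φ(a,b') + φ(a',b) for every edge aa' of G and every edge bb' of H has dimension at most |V(G)| + |V(H)| − 1. -/
open scoped Classical
open Finset

section TriangulatedProduct

variable {VG VH : Type*}

/-- The column of the Laplacian matrix of `G` indexed by the vertex `w`:
its entry at `v` is `-deg v` if `v = w`, `1` if `v` is adjacent to `w`, and `0` otherwise. -/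
noncomputable def lapCol (G : SimpleGraph VG) [Fintype VG] (w v : VG) : ℤ :=
  if v = w then -(((Finset.univ.filter (fun u => G.Adj v u)).card : ℤ))
  else if G.Adj v w then 1 else 0

/-- A divisor on a finite graph is principal if it lies in the ℤ-span of the
columns of the Laplacian matrix of the graph. -/
def GraphPrincipal (G : SimpleGraph VG) [Fintype VG] (D : VG → ℤ) : Prop :=
  ∃ f : VG → ℤ, ∀ v, D v = ∑ w, f w * lapCol G w v

/-- A triangulated product of the graphs `G` and `H`: for each square
(an edge `aa'` of `G` together with an edge `bb'` of `H`) exactly one of the two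
possible diagonals `{(a,b),(a',b')}`, `{(a,b'),(a',b)}` is chosen.  The structure
records the resulting symmetric "diagonal edge" relation. -/
structure TriProd (G : SimpleGraph VG) (H : SimpleGraph VH) where
  diag : VG × VH → VG × VH → Prop
  diag_symm : ∀ u v, diag u v → diag v u
  diag_adj : ∀ a a' b b', diag (a, b) (a', b') → G.Adj a a' ∧ H.Adj b b'
  diag_choice : ∀ a a' b b', G.Adj a a' → H.Adj b b' →
    (diag (a, b) (a', b') ∧ ¬ diag (a, b') (a', b)) ∨
    (¬ diag (a, b) (a', b') ∧ diag (a, b') (a', b))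

namespace TriProd

variable {G : SimpleGraph VG} {H : SimpleGraph VH}

/-- `u` and `v` form an edge of the triangulated product: a horizontal edge,
a vertical edge, or a diagonal edge. -/
def Adj (T : TriProd G H) (u v : VG × VH) : Prop :=
  (u.2 = v.2 ∧ G.Adj u.1 v.1) ∨ (u.1 = v.1 ∧ H.Adj u.2 v.2) ∨ T.diag u v

/-- `{u, v, w}` is a triangle (2-face) of the triangulated product. -/
def IsFace (T : TriProd G H) (u v w : VG × VH) : Prop :=
  ∃ a a' b b', T.diag (a, b) (a', b') ∧
    ({u, v, w} : Finset (VG × VH)) = {(a, b), (a', b'), (a', b)}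

/-- `{u, v, w}` is a triangle of the triangulated product whose diagonal edge
does not contain the vertex `x`. -/
def IsFaceAvoiding (T : TriProd G H) (u v w x : VG × VH) : Prop :=
  ∃ a a' b b', T.diag (a, b) (a', b') ∧
    ({u, v, w} : Finset (VG × VH)) = {(a, b), (a', b'), (a', b)} ∧
    x ≠ (a, b) ∧ x ≠ (a', b')

variable [Fintype VG] [Fintype VH]

/-- The structure constant `α(e, x)` for the edge `e = {u, v}` of the
triangulated product and the vertex `x`. -/
noncomputable def alpha (T : TriProd G H) (u v x : VG × VH) : ℤ :=
  if x = u ∨ x = v then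
    (if T.diag u v then 1
     else ((Finset.univ.filter (fun w => T.IsFaceAvoiding u v w x)).card : ℤ))
  else 0

/-- The divisor of the function `φ`, evaluated at the edge `{u, v}` of the
triangulated product: the sum of `φ` over the third vertices of the triangles
containing `{u, v}`, minus `α({u,v},u) φ(u) + α({u,v},v) φ(v)`. -/
noncomputable def Div (T : TriProd G H) (φ : VG × VH → ℤ) (u v : VG × VH) : ℤ :=
  (∑ w ∈ Finset.univ.filter (fun w => T.IsFace u v w), φ w)
    - (T.alpha u v u * φ u + T.alpha u v v * φ v)

/-- A divisor on the triangulated product (a function on edges, encoded as a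
function on ordered pairs of vertices) is principal if it agrees with `Div φ`
on every edge, for some `φ`. -/
def Principal (T : TriProd G H) (D : VG × VH → VG × VH → ℤ) : Prop :=
  ∃ φ : VG × VH → ℤ, ∀ u v, T.Adj u v → D u v = T.Div φ u v

/-- A divisor on the triangulated product is Cartier if near every vertex `x`
it agrees with a principal divisor on all edges containing `x`. -/
def Cartier (T : TriProd G H) (D : VG × VH → VG × VH → ℤ) : Prop :=
  ∀ x : VG × VH, ∃ φ : VG × VH → ℤ,
    ∀ u v, T.Adj u v → (x = u ∨ x = v) → D u v = T.Div φ u v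

/-- A divisor is ℚ-Cartier if some nonzero integer multiple of it is Cartier. -/
def QCartier (T : TriProd G H) (D : VG × VH → VG × VH → ℤ) : Prop :=
  ∃ m : ℤ, m ≠ 0 ∧ T.Cartier (fun u v => m * D u v)

/-- The balancing conditions for a divisor `D` on the triangulated product. -/
def Balanced (T : TriProd G H) (D : VG × VH → VG × VH → ℤ) : Prop :=
  ∀ a : VG, ∀ b : VH,
    (∀ x x' : VG, G.Adj a x → G.Adj a x' →
      (∑ c ∈ Finset.univ.filter (fun c : VH => T.Adj (a, b) (x, c)), D (a, b) (x, c)) =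
      (∑ c ∈ Finset.univ.filter (fun c : VH => T.Adj (a, b) (x', c)), D (a, b) (x', c))) ∧
    (∀ y y' : VH, H.Adj b y → H.Adj b y' →
      (∑ c ∈ Finset.univ.filter (fun c : VG => T.Adj (a, b) (c, y)), D (a, b) (c, y)) =
      (∑ c ∈ Finset.univ.filter (fun c : VG => T.Adj (a, b) (c, y')), D (a, b) (c, y')))

end TriProd

/-- The map `β` sending a pair of divisors on `G` and `H` to a divisor on the
triangulated product: `C(a)` on vertical edges `{(a,b),(a,b')}`, `D(b)` on
horizontal edges `{(a,b),(a',b)}`, and `0` on diagonal edges. -/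
noncomputable def beta (C : VG → ℤ) (D : VH → ℤ) (u v : VG × VH) : ℤ :=
  if u.1 = v.1 then C u.1 else if u.2 = v.2 then D u.2 else 0

end TriangulatedProduct

/-- The ℚ-vector space of functions `φ : V(G) × V(H) → ℚ` satisfying
`φ(a,b) + φ(a',b') = φ(a,b') + φ(a',b)` for every edge `aa'` of `G` and
every edge `bb'` of `H`. -/
def squareRelationSpace {VG VH : Type*} (G : SimpleGraph VG) (H : SimpleGraph VH) :
    Submodule ℚ ((VG × VH) → ℚ) where
  carrier := {φ | ∀ a a' b b', G.Adj a a' → H.Adj b b' →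
    φ (a, b) + φ (a', b') = φ (a, b') + φ (a', b)}
  add_mem' := by
    intro f g hf hg a a' b b' h1 h2
    have h3 := hf a a' b b' h1 h2
    have h4 := hg a a' b b' h1 h2
    simp only [Pi.add_apply]
    linarith
  zero_mem' := by
    intro a a' b b' _ _
    simp
  smul_mem' := by
    intro c f hf a a' b b' h1 h2
    have h3 := hf a a' b b' h1 h2
    simp only [Pi.smul_apply, smul_eq_mul]
    rw [← mul_add, ← mul_add, h3]

/-!
By connectivity of `G`, the square relation along one edge `bb'` of `H` says that
`a ↦ φ(a,b) - φ(a,b')` is constant; by connectivity of `H` it then holds for all pairs `b, b'`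
and all `a, a'`. Hence `φ(a,b) = φ(a,b₀) + (φ(a₀,b) - φ(a₀,b₀))`, so the space lies in the image
of `(f, g) ↦ f a + g b` on `ℚ^V(G) × ℚ^V(H)`, whose kernel contains `(1, -1) ≠ 0`.
-/

namespace SimpleGraph

theorem Preconnected.eq_of_forall_adj {V α : Type*} {G : SimpleGraph V} (hG : G.Preconnected)
    {f : V → α} (hf : ∀ a a', G.Adj a a' → f a = f a') (a a' : V) : f a = f a' := by
  obtain ⟨p⟩ := hG a a'
  induction p with
  | nil => rfl
  | cons h _ ih => exact (hf _ _ h).trans ih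

end SimpleGraph

section SquareRelation

variable {VG VH : Type*} {G : SimpleGraph VG} {H : SimpleGraph VH}

theorem squareRelation_of_preconnected (hG : G.Preconnected) (hH : H.Preconnected)
    {φ : VG × VH → ℚ} (hφ : φ ∈ squareRelationSpace G H) (a a' : VG) (b b' : VH) :
    φ (a, b) + φ (a', b') = φ (a, b') + φ (a', b) := by
  have hcol : ∀ b b', H.Adj b b' → ∀ a a', φ (a, b) - φ (a, b') = φ (a', b) - φ (a', b') :=
    fun b b' hb => hG.eq_of_forall_adj fun a a' ha => by linarith [hφ a a' b b' ha hb]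
  have hrow : φ (a, b) - φ (a', b) = φ (a, b') - φ (a', b') :=
    hH.eq_of_forall_adj (f := fun b => φ (a, b) - φ (a', b))
      (fun b b' hb => by linarith [hcol b b' hb a a']) b b'
  linarith

variable (VG VH)

def sumOfCoords : (VG → ℚ) × (VH → ℚ) →ₗ[ℚ] (VG × VH → ℚ) :=
  (LinearMap.funLeft ℚ ℚ Prod.fst).coprod (LinearMap.funLeft ℚ ℚ Prod.snd)

@[simp]
theorem sumOfCoords_apply (f : VG → ℚ) (g : VH → ℚ) (p : VG × VH) :
    sumOfCoords VG VH (f, g) p = f p.1 + g p.2 :=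
  rfl

theorem one_le_finrank_ker_sumOfCoords [Finite VG] [Finite VH] [Nonempty VG] :
    1 ≤ Module.finrank ℚ (LinearMap.ker (sumOfCoords VG VH)) := by
  obtain ⟨a⟩ := ‹Nonempty VG›
  refine Submodule.one_le_finrank_iff.mpr <| (Submodule.ne_bot_iff _).mpr
    ⟨(fun _ => 1, fun _ => -1), ?_, fun h => one_ne_zero (congrFun (congrArg Prod.fst h) a)⟩
  ext p
  simp

variable {VG VH}

theorem squareRelationSpace_le_range_sumOfCoords (hG : G.Connected) (hH : H.Connected) :
    squareRelationSpace G H ≤ LinearMap.range (sumOfCoords VG VH) := by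
  intro φ hφ
  obtain ⟨a₀⟩ := hG.nonempty
  obtain ⟨b₀⟩ := hH.nonempty
  refine ⟨(fun a => φ (a, b₀), fun b => φ (a₀, b) - φ (a₀, b₀)), funext fun ⟨a, b⟩ => ?_⟩
  have := squareRelation_of_preconnected hG.preconnected hH.preconnected hφ a a₀ b b₀
  simp only [sumOfCoords_apply]
  linarith

end SquareRelation

/-- For finite connected simple graphs `G` and `H`, the ℚ-vector space
of functions `φ : V(G) × V(H) → ℚ` with `φ(a,b) + φ(a',b') = φ(a,b') + φ(a',b)` for all
edges `aa'` of `G` and `bb'` of `H` has dimension at most `|V(G)| + |V(H)| − 1`. -/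
theorem squareRelationSpace_finrank_le {VG VH : Type*} [Fintype VG] [Fintype VH]
    (G : SimpleGraph VG) (H : SimpleGraph VH)
    (hG : G.Connected) (hH : H.Connected) :
    Module.finrank ℚ (squareRelationSpace G H) ≤
      Fintype.card VG + Fintype.card VH - 1 := by
  have : Nonempty VG := hG.nonempty
  have hrank := (sumOfCoords VG VH).finrank_range_add_finrank_ker
  rw [Module.finrank_prod, Module.finrank_fintype_fun_eq_card,
    Module.finrank_fintype_fun_eq_card] at hrank
  have hrange := Submodule.finrank_mono (squareRelationSpace_le_range_sumOfCoords hG hH)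
  have hker := one_le_finrank_ker_sumOfCoords VG VH
  omega
end

section
/- Let G be a finite connected simple graph with at least one edge, let H = K₂ be the complete graph on two vertices w₁, w₂, and let Δ be a triangulated product of G and H. Then every Cartier divisor D on Δ can be written as D = D' + Σ_{v∈V(G)} k_v·Div(1_{(v,w₂)}), where each k_v ∈ ℤ, 1_{(v,w₂)} is the indicator function of the vertex (v,w₂), and D' is a Cartier divisor on Δ vanishing on every diagonal edge of Δ. -/
open scoped Classical
open Finset

/-!
Near `(a, false)` a Cartier divisor `D` is `Div ψ` for a local function `ψ`. On the square over an
edge `aa'` with diagonal `(a, false)(a', true)`, the bottom edge `(a, false)(a', false)` lies in a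
single triangle, so `Div ψ` is `ψ (a', true) - ψ (a', false)` there and
`ψ (a', false) + ψ (a, true) - ψ (a, false) - ψ (a', true)` on the diagonal. Hence `D` on the
diagonal plus `D` on the bottom edge is `k a := ψ (a, true) - ψ (a, false)`, while the local
function at `(a', false)` shows that `D` on the bottom edge is `k a'`. So `D` equals `k a - k a'` on
every diagonal, as does `Div (∑ v, k v • 1_(v, true))`, and subtracting this principal divisor
leaves a Cartier divisor vanishing on the diagonals.
-/

namespace TriProd

section

variable {VG VH : Type*} {G : SimpleGraph VG} {H : SimpleGraph VH} (T : TriProd G H)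

theorem diag_comm {u v : VG × VH} : T.diag u v ↔ T.diag v u :=
  ⟨T.diag_symm u v, T.diag_symm v u⟩

theorem isFace_comm (u v w : VG × VH) : T.IsFace u v w ↔ T.IsFace v u w := by
  rw [IsFace, IsFace, Finset.insert_comm]

theorem isFaceAvoiding_comm (u v w x : VG × VH) :
    T.IsFaceAvoiding u v w x ↔ T.IsFaceAvoiding v u w x := by
  rw [IsFaceAvoiding, IsFaceAvoiding, Finset.insert_comm]

theorem not_diag_of_snd_eq (a a' : VG) (b : VH) : ¬ T.diag (a, b) (a', b) := fun h =>
  (T.diag_adj _ _ _ _ h).2.ne rfl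

theorem not_diag_flip {a a' : VG} {b b' : VH} (hd : T.diag (a, b) (a', b')) :
    ¬ T.diag (a', b) (a, b') := fun h' => by
  have := T.diag_adj _ _ _ _ hd
  rcases T.diag_choice a a' b b' this.1 this.2 with h | h
  · exact h.2 (T.diag_symm _ _ h')
  · exact h.1 hd

theorem isFace_diag_iff {a a' : VG} {b b' : VH} (hd : T.diag (a, b) (a', b')) (w : VG × VH) :
    T.IsFace (a, b) (a', b') w ↔ w = (a', b) ∨ w = (a, b') := by
  have ha := (T.diag_adj _ _ _ _ hd).1.ne
  have hb := (T.diag_adj _ _ _ _ hd).2.ne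
  constructor
  · rintro ⟨c, c', d, d', -, hset⟩
    simp only [Finset.ext_iff, Finset.mem_insert, Finset.mem_singleton] at hset
    have hab := hset (a, b)
    have hab' := hset (a', b')
    have hcd' := hset (c', d)
    simp only [Prod.ext_iff] at hab hab' hcd' ⊢
    grind
  · rintro (rfl | rfl)
    · exact ⟨a, a', b, b', hd, rfl⟩
    · exact ⟨a', a, b', b, T.diag_symm _ _ hd, Finset.insert_comm _ _ _⟩

variable [Fintype VG] [Fintype VH]

theorem alpha_comm (u v x : VG × VH) : T.alpha u v x = T.alpha v u x := by
  simp only [alpha, or_comm, T.diag_comm, T.isFaceAvoiding_comm u v]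

theorem div_comm (φ : VG × VH → ℤ) (u v : VG × VH) : T.Div φ u v = T.Div φ v u := by
  simp only [Div, T.isFace_comm u v, T.alpha_comm u v]
  ring

theorem div_sub (φ ψ : VG × VH → ℤ) (u v : VG × VH) :
    T.Div (fun p => φ p - ψ p) u v = T.Div φ u v - T.Div ψ u v := by
  simp only [Div, Finset.sum_sub_distrib]
  ring

theorem sum_mul_div {ι : Type*} (s : Finset ι) (k : ι → ℤ) (f : ι → VG × VH → ℤ)
    (u v : VG × VH) :
    ∑ i ∈ s, k i * T.Div (f i) u v = T.Div (fun p => ∑ i ∈ s, k i * f i p) u v := by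
  simp only [Div, Finset.mul_sum, mul_sub, mul_add, Finset.sum_sub_distrib,
    Finset.sum_add_distrib, mul_left_comm]
  rw [Finset.sum_comm]

theorem div_diag (φ : VG × VH → ℤ) {a a' : VG} {b b' : VH} (hd : T.diag (a, b) (a', b')) :
    T.Div φ (a, b) (a', b') = φ (a', b) + φ (a, b') - φ (a, b) - φ (a', b') := by
  have hfaces : Finset.univ.filter (T.IsFace (a, b) (a', b')) = {(a', b), (a, b')} := by
    ext w
    simp [T.isFace_diag_iff hd]
  have hne : (a', b) ≠ (a, b') := fun h => (T.diag_adj _ _ _ _ hd).1.ne (congrArg Prod.fst h).symm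
  simp only [Div, alpha, hfaces, Finset.sum_pair hne, hd, true_or, or_true, if_true]
  ring

theorem cartier_sub_div {D : VG × VH → VG × VH → ℤ} (hD : T.Cartier D) (φ : VG × VH → ℤ) :
    T.Cartier (fun u v => D u v - T.Div φ u v) := fun x => by
  obtain ⟨ψ, hψ⟩ := hD x
  exact ⟨fun p => ψ p - φ p, fun u v huv hx => by rw [T.div_sub, ← hψ u v huv hx]⟩

end

section

variable {VG : Type*} {G : SimpleGraph VG} (T : TriProd G (⊤ : SimpleGraph Bool))

theorem eq_of_face_bottom {a a' c c' : VG} {d d' : Bool} {w : VG × Bool}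
    (hd : T.diag (a, false) (a', true)) (hcd : T.diag (c, d) (c', d'))
    -- elementwise, since the `Finset` triangles of `IsFace` carry a classical `DecidableEq Bool`
    (hset : ∀ z, (z = (a, false) ∨ z = (a', false) ∨ z = w) ↔
      (z = (c, d) ∨ z = (c', d') ∨ z = (c', d))) :
    c = a ∧ c' = a' ∧ d = false ∧ d' = true ∧ w = (a', true) := by
  have ha := (T.diag_adj _ _ _ _ hd).1.ne
  have hdd := (T.diag_adj _ _ _ _ hcd).2.ne
  have hflip := T.not_diag_flip hd
  have ha₀ := hset (a, false)
  have ha'₀ := hset (a', false)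
  have hc'd' := hset (c', d')
  simp only [Prod.ext_iff] at ha₀ ha'₀ hc'd' ⊢
  cases d <;> cases d' <;> grind

theorem isFace_bottom_iff {a a' : VG} (hd : T.diag (a, false) (a', true)) (w : VG × Bool) :
    T.IsFace (a, false) (a', false) w ↔ w = (a', true) := by
  constructor
  · rintro ⟨c, c', d, d', hcd, hset⟩
    simp only [Finset.ext_iff, Finset.mem_insert, Finset.mem_singleton] at hset
    exact (T.eq_of_face_bottom hd hcd hset).2.2.2.2
  · rintro rfl
    exact ⟨a, a', false, true, hd, by ext; simp [or_comm]⟩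

theorem isFaceAvoiding_bottom_iff {a a' : VG} (hd : T.diag (a, false) (a', true))
    (w x : VG × Bool) :
    T.IsFaceAvoiding (a, false) (a', false) w x ↔
      w = (a', true) ∧ x ≠ (a, false) ∧ x ≠ (a', true) := by
  constructor
  · rintro ⟨c, c', d, d', hcd, hset, hx, hx'⟩
    simp only [Finset.ext_iff, Finset.mem_insert, Finset.mem_singleton] at hset
    obtain ⟨rfl, rfl, rfl, rfl, rfl⟩ := T.eq_of_face_bottom hd hcd hset
    exact ⟨rfl, hx, hx'⟩
  · rintro ⟨rfl, hx, hx'⟩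
    exact ⟨a, a', false, true, hd, by ext; simp [or_comm], hx, hx'⟩

variable [Fintype VG]

theorem div_bottom (φ : VG × Bool → ℤ) {a a' : VG} (hd : T.diag (a, false) (a', true)) :
    T.Div φ (a, false) (a', false) = φ (a', true) - φ (a', false) := by
  have hfaces : Finset.univ.filter (T.IsFace (a, false) (a', false)) = {(a', true)} := by
    ext w
    simp [T.isFace_bottom_iff hd]
  have hleft : Finset.univ.filter
      (fun w => T.IsFaceAvoiding (a, false) (a', false) w (a, false)) = ∅ := by
    ext w
    simp [T.isFaceAvoiding_bottom_iff hd]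
  have hright : Finset.univ.filter
      (fun w => T.IsFaceAvoiding (a, false) (a', false) w (a', false)) = {(a', true)} := by
    ext w
    simp [T.isFaceAvoiding_bottom_iff hd, (T.diag_adj _ _ _ _ hd).1.ne']
  simp [Div, alpha, hfaces, hleft, hright, T.not_diag_of_snd_eq]

theorem exists_diag_eq_sub_of_cartier {D : VG × Bool → VG × Bool → ℤ} (hD : T.Cartier D) :
    ∃ k : VG → ℤ, ∀ a a', T.diag (a, false) (a', true) → D (a, false) (a', true) = k a - k a' := by
  choose ψ hψ using hD
  refine ⟨fun a => ψ (a, false) (a, true) - ψ (a, false) (a, false), fun a a' hd => ?_⟩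
  have hbottom : T.Adj (a, false) (a', false) := Or.inl ⟨rfl, (T.diag_adj _ _ _ _ hd).1⟩
  have hdiag := hψ (a, false) _ _ (Or.inr (Or.inr hd)) (Or.inl rfl)
  have hbottom_a := hψ (a, false) _ _ hbottom (Or.inl rfl)
  have hbottom_a' := hψ (a', false) _ _ hbottom (Or.inr rfl)
  rw [T.div_diag _ hd] at hdiag
  rw [T.div_bottom _ hd] at hbottom_a hbottom_a'
  linarith

theorem exists_diag_eq_sum_div_of_cartier {D : VG × Bool → VG × Bool → ℤ}
    (hsymm : ∀ u v, D u v = D v u) (hD : T.Cartier D) :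
    ∃ k : VG → ℤ, ∀ u v, T.diag u v →
      D u v = ∑ x, k x * T.Div (fun p => if p = (x, true) then 1 else 0) u v := by
  obtain ⟨k, hk⟩ := T.exists_diag_eq_sub_of_cartier hD
  have hcanon : ∀ a a', T.diag (a, false) (a', true) →
      D (a, false) (a', true) =
        ∑ x, k x * T.Div (fun p => if p = (x, true) then 1 else 0) (a, false) (a', true) := by
    intro a a' hd
    rw [hk a a' hd, T.sum_mul_div, T.div_diag _ hd]
    simp
  refine ⟨k, ?_⟩
  rintro ⟨a, (_ | _)⟩ ⟨a', (_ | _)⟩ hd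
  · exact absurd hd (T.not_diag_of_snd_eq a a' false)
  · exact hcanon a a' hd
  · simp only [hsymm (a, true), T.div_comm _ (a, true)]
    exact hcanon a' a (T.diag_symm _ _ hd)
  · exact absurd hd (T.not_diag_of_snd_eq a a' true)

end

end TriProd

theorem cartier_decomposition_K2_general {VG : Type*} [Fintype VG]
    (G : SimpleGraph VG)
    (T : TriProd G (⊤ : SimpleGraph Bool))
    (D : VG × Bool → VG × Bool → ℤ) (hsymm : ∀ u v, D u v = D v u)
    (hD : T.Cartier D) :
    ∃ (k : VG → ℤ) (D' : VG × Bool → VG × Bool → ℤ),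
      (∀ u v, D' u v = D' v u) ∧ T.Cartier D' ∧
      (∀ u v, T.diag u v → D' u v = 0) ∧
      (∀ u v, T.Adj u v →
        D u v = D' u v +
          ∑ x : VG, k x * T.Div (fun p => if p = (x, true) then 1 else 0) u v) := by
  obtain ⟨k, hk⟩ := T.exists_diag_eq_sum_div_of_cartier hsymm hD
  refine ⟨k, fun u v => D u v - ∑ x, k x * T.Div (fun p => if p = (x, true) then 1 else 0) u v,
    fun u v => by simp only [hsymm u v, T.div_comm _ u v], ?_,
    fun u v huv => sub_eq_zero.2 (hk u v huv), fun u v _ => (sub_add_cancel _ _).symm⟩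
  simp only [T.sum_mul_div]
  exact T.cartier_sub_div hD _

/-- Let `H = K₂` be the complete graph on the two vertices
`w₁ = false`, `w₂ = true`.  Every Cartier divisor `D` on a triangulated product `Δ`
of `G` and `K₂` can be written as `D = D' + Σ_{v ∈ V(G)} k_v · Div(1_{(v,w₂)})`
where `D'` is a Cartier divisor vanishing on every diagonal edge of `Δ`. -/
theorem cartier_decomposition_K2 {VG : Type*} [Fintype VG]
    (G : SimpleGraph VG)
    (hG : G.Connected) (hGe : ∃ a a', G.Adj a a')
    (T : TriProd G (⊤ : SimpleGraph Bool))
    (D : VG × Bool → VG × Bool → ℤ) (hsymm : ∀ u v, D u v = D v u)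
    (hD : T.Cartier D) :
    ∃ (k : VG → ℤ) (D' : VG × Bool → VG × Bool → ℤ),
      (∀ u v, D' u v = D' v u) ∧ T.Cartier D' ∧
      (∀ u v, T.diag u v → D' u v = 0) ∧
      (∀ u v, T.Adj u v →
        D u v = D' u v +
          ∑ x : VG, k x * T.Div (fun p => if p = (x, true) then 1 else 0) u v) :=
  cartier_decomposition_K2_general G T D hsymm hD
end

section
/- For every finite connected simple graph G with at least one vertex, Pic(G) is isomorphic as an abelian group to ℤ × K(G) for some finite abelian group K(G). -/
open scoped Classical
open Finset

/-! The degree map `Pic(G) → ℤ` is well defined because every Laplacian column has degree zero,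
and it is split by the class of a single vertex, so `Pic(G) ≅ ℤ × K` with `K` its kernel; `K` is
finitely generated, being a quotient of `Pic(G)`. It is also torsion: over `ℚ` the Laplacian of a
connected graph has only the constants in its kernel, so by counting dimensions its image is
exactly the hyperplane of degree-zero vectors, and clearing denominators puts a nonzero multiple
of every degree-zero divisor into the integer image. -/

namespace AddMonoidHom

variable {A B : Type*} [AddCommGroup A] [AddCommGroup B]

def equivProdKerOfRightInverse (f : A →+ B) (s : B →+ A) (hs : Function.RightInverse s f) :
    A ≃+ B × f.ker where
  toFun x := (f x, ⟨x - s (f x), by simp [hs (f x)]⟩)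
  invFun p := s p.1 + p.2
  left_inv x := by simp
  right_inv := by
    rintro ⟨b, k, hk⟩
    rw [mem_ker] at hk
    ext <;> simp [hk, hs b]
  map_add' x y := by
    ext
    · simp
    · simp only [map_add, Prod.snd_add, AddSubgroup.coe_add]
      abel

end AddMonoidHom

namespace SimpleGraph

open Matrix
open scoped Pointwise

variable {V : Type*} [Fintype V] (G : SimpleGraph V)

theorem sum_lapMatrix_mulVec {R : Type*} [CommRing R] (x : V → R) :
    ∑ v, (G.lapMatrix R *ᵥ x) v = 0 :=
  calc ∑ v, (G.lapMatrix R *ᵥ x) v = (fun _ => 1) ⬝ᵥ (G.lapMatrix R *ᵥ x) := by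
        simp [dotProduct]
    _ = (G.lapMatrix R *ᵥ fun _ => 1) ⬝ᵥ x := by
        rw [dotProduct_mulVec, ← mulVec_transpose, (G.isSymm_lapMatrix R).eq]
    _ = 0 := by rw [lapMatrix_mulVec_const_eq_zero, zero_dotProduct]

section OrderedField

variable {K : Type*} [Field K] [LinearOrder K] [IsStrictOrderedRing K]

theorem lapMatrix_mulVec_eq_zero_iff_of_connected (hG : G.Connected) {x : V → K} :
    G.lapMatrix K *ᵥ x = 0 ↔ ∃ c, x = fun _ => c := by
  constructor
  · intro hx
    have hadj : ∀ i j, G.Adj i j → x i = x j := by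
      rw [← lapMatrix_toLinearMap₂'_apply'_eq_zero_iff_forall_adj, toLinearMap₂'_apply', hx,
        dotProduct_zero]
    obtain ⟨v⟩ := hG.nonempty
    refine ⟨x v, funext fun w => ?_⟩
    induction (hG w v).some with
    | nil => rfl
    | cons h _ ih => exact (hadj _ _ h).trans ih
  · rintro ⟨c, rfl⟩
    rw [show (fun _ : V => c) = c • fun _ => (1 : K) by ext; simp, mulVec_smul,
      lapMatrix_mulVec_const_eq_zero, smul_zero]

theorem ker_lapMatrix_mulVecLin_of_connected (hG : G.Connected) :
    LinearMap.ker (G.lapMatrix K).mulVecLin = K ∙ fun _ => 1 := by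
  ext x
  rw [LinearMap.mem_ker, mulVecLin_apply, lapMatrix_mulVec_eq_zero_iff_of_connected G hG,
    Submodule.mem_span_singleton]
  exact ⟨fun ⟨c, hc⟩ => ⟨c, by rw [hc]; ext; simp⟩, fun ⟨c, hc⟩ => ⟨c, by rw [← hc]; ext; simp⟩⟩

theorem mem_range_lapMatrix_mulVecLin_iff (hG : G.Connected) {x : V → K} :
    x ∈ LinearMap.range (G.lapMatrix K).mulVecLin ↔ ∑ v, x v = 0 := by
  let total := Fintype.linearCombination K (fun _ : V => (1 : K))
  have htotal (y : V → K) : total y = ∑ v, y v := by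
    simp [total, Fintype.linearCombination_apply]
  suffices LinearMap.range (G.lapMatrix K).mulVecLin = LinearMap.ker total by
    rw [this, LinearMap.mem_ker, htotal]
  have hle : LinearMap.range (G.lapMatrix K).mulVecLin ≤ LinearMap.ker total := by
    rintro _ ⟨y, rfl⟩
    rw [LinearMap.mem_ker, htotal, mulVecLin_apply, sum_lapMatrix_mulVec]
  obtain ⟨v⟩ := hG.nonempty
  have htotal_surj : LinearMap.range total = ⊤ :=
    LinearMap.range_eq_top.2 fun c => ⟨Pi.single v c, by simp [htotal]⟩
  refine Submodule.eq_of_le_of_finrank_eq hle ?_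
  have hrange := (G.lapMatrix K).mulVecLin.finrank_range_add_finrank_ker
  have hker := total.finrank_range_add_finrank_ker
  rw [ker_lapMatrix_mulVecLin_of_connected G hG,
    finrank_span_singleton (Function.ne_iff.2 ⟨v, one_ne_zero⟩)] at hrange
  rw [htotal_surj, finrank_top, Module.finrank_self] at hker
  omega

end OrderedField

theorem intCast_lapMatrix_mulVec {R : Type*} [Ring R] (z : V → ℤ) (v : V) :
    (((G.lapMatrix ℤ *ᵥ z) v : ℤ) : R) = (G.lapMatrix R *ᵥ fun u => (z u : R)) v := by
  simp [lapMatrix_mulVec_apply]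

theorem exists_zsmul_mem_range_lapMatrix_mulVecLin (hG : G.Connected) {D : V → ℤ}
    (hD : ∑ v, D v = 0) :
    ∃ m : ℤ, m ≠ 0 ∧ m • D ∈ LinearMap.range (G.lapMatrix ℤ).mulVecLin := by
  obtain ⟨y, hy⟩ : (fun v => (D v : ℚ)) ∈ LinearMap.range (G.lapMatrix ℚ).mulVecLin := by
    rw [mem_range_lapMatrix_mulVecLin_iff G hG]
    exact_mod_cast hD
  obtain ⟨⟨m, hm⟩, hmy⟩ := IsLocalization.exist_integer_multiples_of_finite (nonZeroDivisors ℤ) y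
  choose z hz using hmy
  refine ⟨m, nonZeroDivisors.ne_zero hm, z, funext fun v => ?_⟩
  have hcast : (fun u => (z u : ℚ)) = m • y := funext hz
  have hLy : G.lapMatrix ℚ *ᵥ y = fun v => (D v : ℚ) := hy
  have key : (((G.lapMatrix ℤ *ᵥ z) v : ℤ) : ℚ) = ((m * D v : ℤ) : ℚ) := by
    rw [intCast_lapMatrix_mulVec, hcast, mulVec_smul, Pi.smul_apply, hLy, zsmul_eq_mul]
    push_cast; rfl
  exact_mod_cast key

theorem lapCol_eq_neg_lapMatrix (w v : V) : lapCol G w v = -G.lapMatrix ℤ v w := by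
  by_cases h : v = w
  · subst h
    simp [lapCol, lapMatrix, degMatrix, degree, neighborFinset_eq_filter]
  · simp [lapCol, lapMatrix, degMatrix, h]

theorem closure_lapCol_eq_range_lapMatrix_mulVecLin :
    AddSubgroup.closure {D : V → ℤ | ∃ w, D = lapCol G w} =
      (LinearMap.range (G.lapMatrix ℤ).mulVecLin).toAddSubgroup := by
  have hcols : {D : V → ℤ | ∃ w, D = lapCol G w} = -Set.range (G.lapMatrix ℤ).col := by
    ext D
    simp [funext_iff, lapCol_eq_neg_lapMatrix, eq_neg_iff_add_eq_zero, add_comm]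
  rw [range_mulVecLin, Submodule.span_int_eq_addSubgroupClosure, hcols, AddSubgroup.closure_neg]

abbrev Picard : Type _ := (V → ℤ) ⧸ (LinearMap.range (G.lapMatrix ℤ).mulVecLin).toAddSubgroup

noncomputable def picardDeg : G.Picard →+ ℤ :=
  QuotientAddGroup.lift _ (AddMonoidHom.mk' (fun D => ∑ v, D v) fun _ _ => sum_add_distrib)
    (by rintro _ ⟨x, rfl⟩; exact G.sum_lapMatrix_mulVec x)

theorem picardDeg_mk (D : V → ℤ) : G.picardDeg D = ∑ v, D v := rfl

theorem isAddTorsion_ker_picardDeg (hG : G.Connected) : IsAddTorsion G.picardDeg.ker := by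
  rintro ⟨x, hx⟩
  obtain ⟨D, rfl⟩ := QuotientAddGroup.mk_surjective x
  obtain ⟨m, hm, hmD⟩ := G.exists_zsmul_mem_range_lapMatrix_mulVecLin hG hx
  exact isOfFinAddOrder_iff_zsmul_eq_zero.2
    ⟨m, hm, Subtype.ext ((QuotientAddGroup.eq_zero_iff _).2 hmD)⟩

end SimpleGraph

theorem pic_graph_iso_general {VG : Type*} [Fintype VG]
    (G : SimpleGraph VG) (hG : G.Connected) :
    ∃ K : AddSubgroup
        ((VG → ℤ) ⧸ AddSubgroup.closure {D : VG → ℤ | ∃ w, D = lapCol G w}),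
      Finite K ∧
      Nonempty
        (((VG → ℤ) ⧸ AddSubgroup.closure {D : VG → ℤ | ∃ w, D = lapCol G w}) ≃+
          ℤ × K) := by
  rw [G.closure_lapCol_eq_range_lapMatrix_mulVecLin]
  obtain ⟨v⟩ := hG.nonempty
  let x₀ : G.Picard := ↑(Pi.single v 1 : VG → ℤ)
  have hdeg : G.picardDeg x₀ = 1 := by simp [x₀, G.picardDeg_mk]
  let e := G.picardDeg.equivProdKerOfRightInverse (zmultiplesHom _ x₀) fun n => by simp [hdeg]
  have : AddGroup.FG G.picardDeg.ker :=
    AddGroup.fg_of_surjective (f := (AddMonoidHom.snd _ _).comp e.toAddMonoidHom)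
      (Prod.snd_surjective.comp e.surjective)
  exact ⟨_, AddCommGroup.finite_of_fg_isAddTorsion _ (G.isAddTorsion_ker_picardDeg hG), ⟨e⟩⟩

/-- For every finite connected simple graph `G` (with at least one
vertex), the Picard group of `G` — the quotient of the group of divisors on `G` by the
subgroup generated by the columns of the Laplacian matrix — is isomorphic to `ℤ × K`
for some finite abelian group `K`. -/
theorem pic_graph_iso {VG : Type*} [Fintype VG] [Nonempty VG]
    (G : SimpleGraph VG) (hG : G.Connected) :
    ∃ K : AddSubgroup
        ((VG → ℤ) ⧸ AddSubgroup.closure {D : VG → ℤ | ∃ w, D = lapCol G w}),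
      Finite K ∧
      Nonempty
        (((VG → ℤ) ⧸ AddSubgroup.closure {D : VG → ℤ | ∃ w, D = lapCol G w}) ≃+
          ℤ × K) :=
  pic_graph_iso_general G hG
end

section
/- For every vertex (a,b) of the triangulated product Δ and every neighbor x of a in G, the sum of α({(a,b),(x,c)}, (a,b)) over all c∈V(H) with {(a,b),(x,c)}∈E(Δ) equals deg_H(b), the degree of b in H; in particular this sum is independent of the choice of neighbor x. -/
open scoped Classical
open Finset

/-!
The edges of `Δ` from `(a,b)` into the column of `x` are the horizontal edge to `(x,b)` and the
diagonals `{(a,b),(x,c)}`. Each diagonal contributes `1`, and the horizontal edge contributes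
the number of its triangles whose diagonal misses `(a,b)`, i.e. has the form `{(x,b),(a,c)}`.
For every neighbour `c` of `b` the square over `ax` and `bc` carries exactly one of these two
diagonals, so the contributions add up to `deg_H b`.
-/

namespace TriProd

variable {VG VH : Type*} {G : SimpleGraph VG} {H : SimpleGraph VH} (T : TriProd G H)

theorem snd_ne_of_diag {a a' : VG} {b b' : VH} (h : T.diag (a, b) (a', b')) : b ≠ b' :=
  (T.diag_adj _ _ _ _ h).2.ne

theorem adj_mk_iff {a x : VG} (hax : G.Adj a x) (b c : VH) :
    T.Adj (a, b) (x, c) ↔ c = b ∨ T.diag (a, b) (x, c) := by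
  simp only [Adj, hax.ne, false_and, false_or, and_iff_left hax, eq_comm]

theorem isFaceAvoiding_horizontal_iff {a x : VG} (hax : a ≠ x) (b : VH) (w : VG × VH) :
    T.IsFaceAvoiding (a, b) (x, b) w (a, b) ↔ ∃ c, T.diag (x, b) (a, c) ∧ (a, c) = w := by
  constructor
  · rintro ⟨A, A', B, B', hdiag, hface, hne, hne'⟩
    have hmem : ∀ p ∈ ({(a, b), (x, b), w} : Finset (VG × VH)),
        p = (A, B) ∨ p = (A', B') ∨ p = (A', B) := by
      simp [hface]
    -- `(a,b)` avoids the diagonal, so it is the corner `(A',B)`; then `(x,b)` must be `(A,B)`.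
    obtain ⟨rfl, rfl⟩ : a = A' ∧ b = B := by
      simpa [hne, hne', eq_comm] using hmem (a, b) (by simp)
    obtain rfl : x = A := by
      simpa [hax.symm] using hmem (x, b) (by simp)
    have hw : (a, B') ∈ ({(a, b), (x, b), w} : Finset (VG × VH)) := by
      simp [hface]
    simp only [mem_insert, mem_singleton, Prod.mk.injEq, (T.snd_ne_of_diag hdiag).symm,
      hax, and_false, false_or] at hw
    exact ⟨B', hdiag, hw⟩
  · rintro ⟨c, hdiag, rfl⟩
    refine ⟨x, a, b, c, hdiag, ?_, by simp [hax], by simp [T.snd_ne_of_diag hdiag]⟩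
    ext p
    simp only [mem_insert, mem_singleton]
    tauto

variable [Fintype VH]

theorem card_diag_add_card_diag_swap {a x : VG} (hax : G.Adj a x) (b : VH) :
    #{c | T.diag (a, b) (x, c)} + #{c | T.diag (x, b) (a, c)} = #{c | H.Adj b c} := by
  have hdisj : Disjoint (univ.filter fun c => T.diag (a, b) (x, c))
      (univ.filter fun c => T.diag (x, b) (a, c)) := by
    refine disjoint_filter.2 fun c _ h h' => ?_
    rcases T.diag_choice a x b c hax (T.diag_adj _ _ _ _ h).2 with ⟨-, hno⟩ | ⟨hno, -⟩
    exacts [hno (T.diag_symm _ _ h'), hno h]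
  rw [← card_union_of_disjoint hdisj, ← filter_or]
  congr 1
  refine filter_congr fun c _ => ⟨?_, fun hbc => ?_⟩
  · rintro (h | h)
    exacts [(T.diag_adj _ _ _ _ h).2, (T.diag_adj _ _ _ _ h).2]
  · rcases T.diag_choice a x b c hax hbc with ⟨h, -⟩ | ⟨-, h⟩
    exacts [Or.inl h, Or.inr (T.diag_symm _ _ h)]

variable [Fintype VG]

theorem alpha_of_diag {u v : VG × VH} (h : T.diag u v) : T.alpha u v u = 1 := by
  simp [alpha, h]

theorem alpha_horizontal {a x : VG} (hax : a ≠ x) (b : VH) :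
    T.alpha (a, b) (x, b) (a, b) = #{c | T.diag (x, b) (a, c)} := by
  have hfaces : univ.filter (fun w => T.IsFaceAvoiding (a, b) (x, b) w (a, b)) =
      (univ.filter fun c => T.diag (x, b) (a, c)).map ⟨_, Prod.mk_right_injective a⟩ := by
    ext w
    simp [T.isFaceAvoiding_horizontal_iff hax]
  have hnot : ¬ T.diag (a, b) (x, b) := fun h => T.snd_ne_of_diag h rfl
  simp only [alpha, true_or, if_true, hnot, if_false, hfaces, card_map]

end TriProd

theorem alpha_sum_eq_degree_general {VG VH : Type*} [Fintype VG] [Fintype VH]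
    (G : SimpleGraph VG) (H : SimpleGraph VH)
    (T : TriProd G H)
    (a x : VG) (b : VH) (hax : G.Adj a x) :
    (∑ c ∈ Finset.univ.filter (fun c : VH => T.Adj (a, b) (x, c)),
        T.alpha (a, b) (x, c) (a, b)) =
      ((Finset.univ.filter (fun c : VH => H.Adj b c)).card : ℤ) := by
  have hneighbours : univ.filter (fun c => T.Adj (a, b) (x, c)) =
      insert b (univ.filter fun c => T.diag (a, b) (x, c)) := by
    ext c
    simp [T.adj_mk_iff hax]
  have hb : b ∉ univ.filter fun c => T.diag (a, b) (x, c) := by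
    simpa using fun h => T.snd_ne_of_diag h rfl
  rw [hneighbours, sum_insert hb, T.alpha_horizontal hax.ne,
    sum_congr rfl fun c hc => T.alpha_of_diag (mem_filter.1 hc).2, sum_const, nsmul_one,
    ← T.card_diag_add_card_diag_swap hax b]
  push_cast
  ring

/-- For every vertex `(a,b)` of the triangulated product `Δ` and every
neighbour `x` of `a` in `G`, the sum of `α({(a,b),(x,c)}, (a,b))` over all `c ∈ V(H)`
with `{(a,b),(x,c)}` an edge of `Δ` equals the degree of `b` in `H`; in particular it is
independent of the choice of `x`. -/
theorem alpha_sum_eq_degree {VG VH : Type*} [Fintype VG] [Fintype VH]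
    (G : SimpleGraph VG) (H : SimpleGraph VH)
    (hG : G.Connected) (hH : H.Connected)
    (hGe : ∃ a a', G.Adj a a') (hHe : ∃ b b', H.Adj b b')
    (T : TriProd G H)
    (a x : VG) (b : VH) (hax : G.Adj a x) :
    (∑ c ∈ Finset.univ.filter (fun c : VH => T.Adj (a, b) (x, c)),
        T.alpha (a, b) (x, c) (a, b)) =
      ((Finset.univ.filter (fun c : VH => H.Adj b c)).card : ℤ) :=
  alpha_sum_eq_degree_general G H T a x b hax
end
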